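/- arXiv:1302.4241 — 3 statements merged into one kernel-verified Lean document; each statement's English description precedes it below -/
import Mathlib

section
/- Let φₘ, φₙ ∈ C²[0,π] satisfy φₖ'' + (λₖ² − 2λₖ p(x) − q(x))φₖ = 0 for k = m, n with distinct real λₘ ≠ λₙ, together with the boundary conditions φₖ'(0) − h φₖ(0) = 0 and φₖ'(π) + H φₖ(π) = 0. Then ∫₀^π (2p(x) − λₘ − λₙ) φₘ(x) φₙ(x) dx = 0. -/
/-!
Writing `W = φₘ' φₙ - φₙ' φₘ` for the Wronskian, the two equations give
`W' = φₘ'' φₙ - φₙ'' φₘ = (λₘ - λₙ)(2p - λₘ - λₙ) φₘ φₙ`, while both Robin boundary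
conditions force `W` to vanish at `0` and at `π`. Integrating `W'` over `[0, π]` therefore
gives `(λₘ - λₙ) ∫₀^π (2p - λₘ - λₙ) φₘ φₙ = 0`, and `λₘ ≠ λₙ`.
-/

open Real MeasureTheory intervalIntegral Set

noncomputable def wronskian (u v : ℝ → ℝ) (x : ℝ) : ℝ :=
  deriv u x * v x - deriv v x * u x

theorem hasDerivAt_wronskian {u v : ℝ → ℝ} (hu : ContDiff ℝ 2 u) (hv : ContDiff ℝ 2 v)
    (x : ℝ) :
    HasDerivAt (wronskian u v) (deriv (deriv u) x * v x - deriv (deriv v) x * u x) x := by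
  have hW := ((hu.differentiable_deriv_two x).hasDerivAt.mul
    (hv.differentiable two_ne_zero x).hasDerivAt).sub
    ((hv.differentiable_deriv_two x).hasDerivAt.mul (hu.differentiable two_ne_zero x).hasDerivAt)
  exact hW.congr_deriv (by ring)

theorem integral_deriv_deriv_mul_sub_eq_wronskian {u v : ℝ → ℝ} (hu : ContDiff ℝ 2 u)
    (hv : ContDiff ℝ 2 v) (a b : ℝ) :
    ∫ x in a..b, (deriv (deriv u) x * v x - deriv (deriv v) x * u x) =
      wronskian u v b - wronskian u v a := by
  have hu'' : Continuous (deriv (deriv u)) := (hu.deriv' (n := 1)).continuous_deriv_one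
  have hv'' : Continuous (deriv (deriv v)) := (hv.deriv' (n := 1)).continuous_deriv_one
  have hcont : Continuous fun x ↦ deriv (deriv u) x * v x - deriv (deriv v) x * u x :=
    (hu''.mul hv.continuous).sub (hv''.mul hu.continuous)
  exact integral_eq_sub_of_hasDerivAt (fun x _ ↦ hasDerivAt_wronskian hu hv x)
    (hcont.intervalIntegrable a b)

theorem wronskian_eq_zero_of_deriv_eq_mul {u v : ℝ → ℝ} {a c : ℝ}
    (hu : deriv u a = c * u a) (hv : deriv v a = c * v a) : wronskian u v a = 0 := by
  rw [wronskian, hu, hv]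
  ring

theorem deriv_deriv_mul_sub_eq_of_pencil {u v : ℝ → ℝ} {p q : ℝ → ℝ} {lu lv x : ℝ}
    (hu : deriv (deriv u) x + (lu ^ 2 - 2 * lu * p x - q x) * u x = 0)
    (hv : deriv (deriv v) x + (lv ^ 2 - 2 * lv * p x - q x) * v x = 0) :
    deriv (deriv u) x * v x - deriv (deriv v) x * u x =
      (lu - lv) * ((2 * p x - lu - lv) * u x * v x) := by
  rw [eq_neg_of_add_eq_zero_left hu, eq_neg_of_add_eq_zero_left hv]
  ring

theorem stmt_3_general (φm φn p q : ℝ → ℝ) (lm ln h H : ℝ)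
    (hφm : ContDiff ℝ 2 φm) (hφn : ContDiff ℝ 2 φn)
    (hne : lm ≠ ln)
    (hODEm : ∀ x ∈ Icc (0:ℝ) π,
      deriv (deriv φm) x + (lm ^ 2 - 2 * lm * p x - q x) * φm x = 0)
    (hODEn : ∀ x ∈ Icc (0:ℝ) π,
      deriv (deriv φn) x + (ln ^ 2 - 2 * ln * p x - q x) * φn x = 0)
    (hbm0 : deriv φm 0 - h * φm 0 = 0) (hbmπ : deriv φm π + H * φm π = 0)
    (hbn0 : deriv φn 0 - h * φn 0 = 0) (hbnπ : deriv φn π + H * φn π = 0) :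
    ∫ x in (0:ℝ)..π, (2 * p x - lm - ln) * φm x * φn x = 0 := by
  have hW0 : wronskian φm φn 0 = 0 :=
    wronskian_eq_zero_of_deriv_eq_mul (c := h) (by linarith) (by linarith)
  have hWπ : wronskian φm φn π = 0 :=
    wronskian_eq_zero_of_deriv_eq_mul (c := -H) (by linarith) (by linarith)
  have hLagrange := integral_deriv_deriv_mul_sub_eq_wronskian hφm hφn 0 π
  rw [hW0, hWπ, sub_zero] at hLagrange
  have hcongr : EqOn (fun x ↦ deriv (deriv φm) x * φn x - deriv (deriv φn) x * φm x)
      (fun x ↦ (lm - ln) * ((2 * p x - lm - ln) * φm x * φn x)) (uIcc 0 π) := by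
    intro x hx
    rw [uIcc_of_le pi_pos.le] at hx
    exact deriv_deriv_mul_sub_eq_of_pencil (hODEm x hx) (hODEn x hx)
  rw [integral_congr hcongr, intervalIntegral.integral_const_mul] at hLagrange
  exact (mul_eq_zero.mp hLagrange).resolve_left (sub_ne_zero.mpr hne)

theorem stmt_3 (φm φn p q : ℝ → ℝ) (lm ln h H : ℝ)
    (hφm : ContDiff ℝ 2 φm) (hφn : ContDiff ℝ 2 φn)
    (hp : Continuous p) (hq : Continuous q)
    (hne : lm ≠ ln)
    (hODEm : ∀ x ∈ Icc (0:ℝ) π,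
      deriv (deriv φm) x + (lm ^ 2 - 2 * lm * p x - q x) * φm x = 0)
    (hODEn : ∀ x ∈ Icc (0:ℝ) π,
      deriv (deriv φn) x + (ln ^ 2 - 2 * ln * p x - q x) * φn x = 0)
    (hbm0 : deriv φm 0 - h * φm 0 = 0) (hbmπ : deriv φm π + H * φm π = 0)
    (hbn0 : deriv φn 0 - h * φn 0 = 0) (hbnπ : deriv φn π + H * φn π = 0) :
    ∫ x in (0:ℝ)..π, (2 * p x - lm - ln) * φm x * φn x = 0 :=
  stmt_3_general φm φn p q lm ln h H hφm hφn hne hODEm hODEn hbm0 hbmπ hbn0 hbnπ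
end

section
/- Let X and X̄ be double sequences in (0,π) with 0 < X₁ⁿ < ... < X_{n−1}ⁿ < π, satisfying Xₖⁿ = (k−1/2)π/n + O(1/n²) and X̄ₖⁿ = (k−1/2)π/n + O(1/n²) uniformly in k. Define Jₙ(x) = max{k : Xₖⁿ ≤ x} and J̄ₙ(x) = max{k : X̄ₖⁿ ≤ x}. Then for every x ∈ (0,π), |Jₙ(x) − J̄ₙ(x)| ≤ 1 for all sufficiently large n. -/
open Real Filter

/-!
Both families are within `O(1/n²)` of the same grid `(k - 1/2)π/n`, whose spacing `π/n` eventually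
exceeds the sum of the two errors. From then on `Yₖ ≤ Xₖ₊₁` and `Xₖ ≤ Yₖ₊₁`, so if `Xⱼ ≤ x` then
also `Yⱼ₋₁ ≤ x`: each index function is at most the other one plus one.
-/

/-- The largest `k ∈ [1, m]` with `a k ≤ x` (`0` if there is none, since `sSup ∅ = 0` in `ℕ`). -/
noncomputable def lastIndexLE (a : ℕ → ℝ) (m : ℕ) (x : ℝ) : ℕ :=
  sSup {k : ℕ | 1 ≤ k ∧ k ≤ m ∧ a k ≤ x}

theorem lastIndexLE_le_add_one {a b : ℕ → ℝ} {m : ℕ}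
    (hba : ∀ k, 1 ≤ k → k + 1 ≤ m → b k ≤ a (k + 1)) (x : ℝ) :
    lastIndexLE a m x ≤ lastIndexLE b m x + 1 := by
  set j := lastIndexLE a m x
  rcases le_or_gt j 1 with hj | hj
  · omega
  have hne : {k : ℕ | 1 ≤ k ∧ k ≤ m ∧ a k ≤ x}.Nonempty := by
    by_contra hempty
    rw [Set.not_nonempty_iff_eq_empty] at hempty
    simp [j, lastIndexLE, hempty] at hj
  have hmem : j ∈ {k : ℕ | 1 ≤ k ∧ k ≤ m ∧ a k ≤ x} :=
    Nat.sSup_mem hne ⟨m, fun k hk => hk.2.1⟩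
  obtain ⟨-, hjm, hajx⟩ := hmem
  have hprev : j - 1 ∈ {k : ℕ | 1 ≤ k ∧ k ≤ m ∧ b k ≤ x} := by
    refine ⟨by omega, by omega, (hba (j - 1) (by omega) (by omega)).trans ?_⟩
    rwa [Nat.sub_add_cancel (by omega)]
  have : j - 1 ≤ lastIndexLE b m x := le_csSup ⟨m, fun k hk => hk.2.1⟩ hprev
  omega

theorem le_succ_of_abs_sub_grid_le {a b : ℕ → ℝ} {m : ℕ} {h ε δ : ℝ}
    (ha : ∀ k, 1 ≤ k → k ≤ m → |a k - ((k : ℝ) - 1 / 2) * h| ≤ ε)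
    (hb : ∀ k, 1 ≤ k → k ≤ m → |b k - ((k : ℝ) - 1 / 2) * h| ≤ δ) (hεδ : ε + δ ≤ h) :
    ∀ k, 1 ≤ k → k + 1 ≤ m → b k ≤ a (k + 1) := by
  intro k hk hkm
  have hak := abs_le.1 (ha (k + 1) (by omega) hkm)
  have hbk := abs_le.1 (hb k hk (by omega))
  push_cast at hak
  linarith [hak.1, hbk.2]

theorem eventually_sq_error_add_le (C C' : ℝ) :
    ∀ᶠ n : ℕ in atTop, C / n ^ 2 + C' / n ^ 2 ≤ π / n := by
  filter_upwards [eventually_ge_atTop 1,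
    tendsto_natCast_atTop_atTop.eventually_ge_atTop ((C + C') / π)] with n hn hnC
  have hn0 : (0 : ℝ) < n := by exact_mod_cast hn
  rw [div_le_iff₀ pi_pos] at hnC
  rw [← add_div, div_le_div_iff₀ (by positivity) hn0]
  nlinarith

theorem stmt_11_general (X Y : ℕ → ℕ → ℝ)
    (hX : ∃ C : ℝ, ∀ n : ℕ, 1 ≤ n → ∀ k : ℕ, 1 ≤ k → k ≤ n - 1 →
      |X n k - ((k : ℝ) - 1/2) * π / n| ≤ C / n ^ 2)
    (hY : ∃ C : ℝ, ∀ n : ℕ, 1 ≤ n → ∀ k : ℕ, 1 ≤ k → k ≤ n - 1 →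
      |Y n k - ((k : ℝ) - 1/2) * π / n| ≤ C / n ^ 2)
    (J J' : ℕ → ℝ → ℕ)
    (hJ : ∀ n x, J n x = sSup {k : ℕ | 1 ≤ k ∧ k ≤ n - 1 ∧ X n k ≤ x})
    (hJ' : ∀ n x, J' n x = sSup {k : ℕ | 1 ≤ k ∧ k ≤ n - 1 ∧ Y n k ≤ x}) :
    ∀ x ∈ Set.Ioo (0:ℝ) π, ∀ᶠ n : ℕ in atTop,
      |(J n x : ℤ) - (J' n x : ℤ)| ≤ 1 := by
  obtain ⟨C, hC⟩ := hX
  obtain ⟨C', hC'⟩ := hY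
  simp only [mul_div_assoc] at hC hC'
  intro x _
  filter_upwards [eventually_ge_atTop 1, eventually_sq_error_add_le C C'] with n hn hsmall
  have hXY : J n x ≤ J' n x + 1 := by
    rw [hJ, hJ']
    exact lastIndexLE_le_add_one (le_succ_of_abs_sub_grid_le (hC n hn) (hC' n hn) hsmall) x
  have hYX : J' n x ≤ J n x + 1 := by
    rw [hJ, hJ']
    exact lastIndexLE_le_add_one
      (le_succ_of_abs_sub_grid_le (hC' n hn) (hC n hn) (by linarith)) x
  rw [abs_le]
  omega

theorem stmt_11 (X Y : ℕ → ℕ → ℝ)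
    (hXmono : ∀ n : ℕ, ∀ k : ℕ, 1 ≤ k → k + 1 ≤ n - 1 → X n k < X n (k + 1))
    (hYmono : ∀ n : ℕ, ∀ k : ℕ, 1 ≤ k → k + 1 ≤ n - 1 → Y n k < Y n (k + 1))
    (hXrange : ∀ n : ℕ, 3 ≤ n → 0 < X n 1 ∧ X n (n - 1) < π)
    (hYrange : ∀ n : ℕ, 3 ≤ n → 0 < Y n 1 ∧ Y n (n - 1) < π)
    (hX : ∃ C : ℝ, ∀ n : ℕ, 1 ≤ n → ∀ k : ℕ, 1 ≤ k → k ≤ n - 1 →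
      |X n k - ((k : ℝ) - 1/2) * π / n| ≤ C / n ^ 2)
    (hY : ∃ C : ℝ, ∀ n : ℕ, 1 ≤ n → ∀ k : ℕ, 1 ≤ k → k ≤ n - 1 →
      |Y n k - ((k : ℝ) - 1/2) * π / n| ≤ C / n ^ 2)
    (J J' : ℕ → ℝ → ℕ)
    (hJ : ∀ n x, J n x = sSup {k : ℕ | 1 ≤ k ∧ k ≤ n - 1 ∧ X n k ≤ x})
    (hJ' : ∀ n x, J' n x = sSup {k : ℕ | 1 ≤ k ∧ k ≤ n - 1 ∧ Y n k ≤ x}) :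
    ∀ x ∈ Set.Ioo (0:ℝ) π, ∀ᶠ n : ℕ in atTop,
      |(J n x : ℤ) - (J' n x : ℤ)| ≤ 1 :=
  stmt_11_general X Y hX hY J J' hJ hJ'
end

section
/- Suppose X and X̄ are double sequences with Xₖⁿ = (k − 1/2)π/n + O(1/n²) (case I asymptotics) and X̄ₖⁿ = kπ/n + O(1/n²) (case II asymptotics), uniformly in k. Then the quantity Sₙ(X,X̄) = n²π Σ_{k=1}^{n−1}|Lₖⁿ − L̄ₖⁿ| + n∫₀^π|p − p̄| does not remain bounded; more precisely, if n²Σₖ|Xₖⁿ − X̄ₖⁿ| is bounded below by c·n² · (π/(2n)) · n for some c > 0, then limsup Sₙ/(1+Sₙ) = 1, i.e. d_Σ(X,X̄) = 1. -/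
/-!
Telescoping, the increments `Xₖ₊₁ - Xₖ` and `Yₖ₊₁ - Yₖ` for `k = 1, …, n - 1` sum to
`π - X₁` and `π - Y₁`, so the sum of the absolute differences of the increments is at least
`|Y₁ - X₁|`. By the two asymptotics this gap is `π/(2n) + O(1/n²)`, hence `Sₙ ≥ π²n/2 - O(1)`
tends to infinity, and `Sₙ/(1 + Sₙ) → 1`.
-/

open Real MeasureTheory Filter

lemma abs_sub_le_sum_abs_sub_increments {f g : ℕ → ℝ} {n : ℕ} (hn : 1 ≤ n) (hfg : f n = g n) :
    |g 1 - f 1| ≤ ∑ k ∈ Finset.Icc 1 (n - 1), |(f (k + 1) - f k) - (g (k + 1) - g k)| := by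
  have hIcc : Finset.Icc 1 (n - 1) = Finset.Ico 1 n := by
    rw [← Finset.Ico_add_one_right_eq_Icc, Nat.sub_add_cancel hn]
  have htel : ∑ k ∈ Finset.Ico 1 n, ((f - g) (k + 1) - (f - g) k) = (f - g) n - (f - g) 1 :=
    Finset.sum_Ico_sub (f - g) hn
  calc |g 1 - f 1| = |∑ k ∈ Finset.Ico 1 n, ((f - g) (k + 1) - (f - g) k)| := by
        rw [htel, Pi.sub_apply, Pi.sub_apply, hfg]; ring_nf
    _ ≤ ∑ k ∈ Finset.Ico 1 n, |(f - g) (k + 1) - (f - g) k| := Finset.abs_sum_le_sum_abs _ _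
    _ = _ := by
        rw [hIcc]
        refine Finset.sum_congr rfl fun k _ => ?_
        simp only [Pi.sub_apply]; ring_nf

lemma first_node_gap_ge {x y Cx Cy : ℝ} {n : ℕ} (hn : 0 < n)
    (hx : |x - ((1 : ℕ) - 1/2) * π / n| ≤ Cx / n ^ 2) (hy : |y - (1 : ℕ) * π / n| ≤ Cy / n ^ 2) :
    π / (2 * n) - (Cx + Cy) / n ^ 2 ≤ y - x := by
  have hn' : (0 : ℝ) < n := by exact_mod_cast hn
  have hsplit : π / (2 * n) - (Cx + Cy) / n ^ 2
      = (1 * π / n - Cy / n ^ 2) - ((1 - 1/2) * π / n + Cx / n ^ 2) := by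
    field_simp; ring
  rw [hsplit]
  push_cast at hx hy
  linarith [(abs_le.mp hx).2, (abs_le.mp hy).1]

lemma tendsto_div_one_add_self_nhds_one {α : Type*} {l : Filter α} {S : α → ℝ}
    (hS : Tendsto S l atTop) : Tendsto (fun a => S a / (1 + S a)) l (nhds 1) := by
  have h1S : Tendsto (fun a => 1 + S a) l atTop := tendsto_atTop_add_const_left _ 1 hS
  have hlim : Tendsto (fun a => 1 - (1 + S a)⁻¹) l (nhds 1) := by
    simpa using tendsto_const_nhds.sub h1S.inv_tendsto_atTop
  refine hlim.congr' ?_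
  filter_upwards [h1S.eventually_gt_atTop 0] with a ha
  field_simp
  ring

theorem stmt_18_general (X Y : ℕ → ℕ → ℝ) (p p' : ℝ → ℝ)
    (hXn : ∀ n : ℕ, 1 ≤ n → X n n = π)
    (hYn : ∀ n : ℕ, 1 ≤ n → Y n n = π)
    (hX : ∃ C : ℝ, ∀ n : ℕ, 1 ≤ n → ∀ k : ℕ, 1 ≤ k → k ≤ n - 1 →
      |X n k - ((k : ℝ) - 1/2) * π / n| ≤ C / n ^ 2)
    (hY : ∃ C : ℝ, ∀ n : ℕ, 1 ≤ n → ∀ k : ℕ, 1 ≤ k → k ≤ n - 1 →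
      |Y n k - (k : ℝ) * π / n| ≤ C / n ^ 2)
    (S : ℕ → ℝ)
    (hS : ∀ n : ℕ, S n = (n : ℝ) ^ 2 * π *
        (∑ k ∈ Finset.Icc 1 (n - 1),
          |(X n (k + 1) - X n k) - (Y n (k + 1) - Y n k)|)
      + n * ∫ x in Set.Ioo (0:ℝ) π, |p x - p' x|) :
    limsup (fun n => S n / (1 + S n)) atTop = 1 := by
  obtain ⟨Cx, hCx⟩ := hX
  obtain ⟨Cy, hCy⟩ := hY
  have hlow : ∀ n : ℕ, 2 ≤ n → π ^ 2 / 2 * n - π * (Cx + Cy) ≤ S n := by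
    intro n hn
    have hn1 : 1 ≤ n := by omega
    have hgap := (first_node_gap_ge hn1 (hCx n hn1 1 le_rfl (by omega))
      (hCy n hn1 1 le_rfl (by omega))).trans <| (le_abs_self _).trans <|
      abs_sub_le_sum_abs_sub_increments hn1 ((hXn n hn1).trans (hYn n hn1).symm)
    have hint : 0 ≤ (n : ℝ) * ∫ x in Set.Ioo (0:ℝ) π, |p x - p' x| :=
      mul_nonneg n.cast_nonneg (integral_nonneg fun x => abs_nonneg _)
    have hn' : (0 : ℝ) < n := by positivity
    calc π ^ 2 / 2 * n - π * (Cx + Cy)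
        = (n : ℝ) ^ 2 * π * (π / (2 * n) - (Cx + Cy) / n ^ 2) := by field_simp
      _ ≤ S n := by
        rw [hS n]
        exact le_add_of_le_of_nonneg (by gcongr) hint
  have hST : Tendsto S atTop atTop := by
    refine tendsto_atTop_mono' atTop (eventually_atTop.mpr ⟨2, hlow⟩) ?_
    exact tendsto_atTop_add_const_right _ _
      (tendsto_natCast_atTop_atTop.const_mul_atTop (by positivity))
  exact (tendsto_div_one_add_self_nhds_one hST).limsup_eq

theorem stmt_18 (X Y : ℕ → ℕ → ℝ) (p p' : ℝ → ℝ)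
    (hX0 : ∀ n : ℕ, 1 ≤ n → X n 0 = 0) (hXn : ∀ n : ℕ, 1 ≤ n → X n n = π)
    (hY0 : ∀ n : ℕ, 1 ≤ n → Y n 0 = 0) (hYn : ∀ n : ℕ, 1 ≤ n → Y n n = π)
    (hX : ∃ C : ℝ, ∀ n : ℕ, 1 ≤ n → ∀ k : ℕ, 1 ≤ k → k ≤ n - 1 →
      |X n k - ((k : ℝ) - 1/2) * π / n| ≤ C / n ^ 2)
    (hY : ∃ C : ℝ, ∀ n : ℕ, 1 ≤ n → ∀ k : ℕ, 1 ≤ k → k ≤ n - 1 →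
      |Y n k - (k : ℝ) * π / n| ≤ C / n ^ 2)
    (S : ℕ → ℝ)
    (hS : ∀ n : ℕ, S n = (n : ℝ) ^ 2 * π *
        (∑ k ∈ Finset.Icc 1 (n - 1),
          |(X n (k + 1) - X n k) - (Y n (k + 1) - Y n k)|)
      + n * ∫ x in Set.Ioo (0:ℝ) π, |p x - p' x|) :
    limsup (fun n => S n / (1 + S n)) atTop = 1 :=
  stmt_18_general X Y p p' hXn hYn hX hY S hS
end
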